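/- arXiv:2603.26056 — 12 statements merged into one kernel-verified Lean document; each statement's English description precedes it below -/
import Mathlib

section
/- Let R ⊆ [0,1]^E be an exact relaxation oracle for the multi-purchase hypergraph G = (V,E). Then the projection onto the (ρ,y)-coordinates of the set of triples (ρ,y,x) in the perspective system with x ∈ {0,1}^V equals the choice probability set C_G. (Theorem 1, exactness part.) -/
open Finset

/-- A vector is binary if each coordinate is 0 or 1. -/
def IsBinaryVec {α : Type*} (x : α → ℝ) : Prop := ∀ i, x i = 0 ∨ x i = 1

variable {N : ℕ}

/-- The denominator `D(x) = 1 + Σ_{c∈E} v_c ∏_{i∈c} x_i`. -/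
noncomputable def Dx (E : Finset (Finset (Fin N))) (v : Finset (Fin N) → ℝ)
    (x : Fin N → ℝ) : ℝ :=
  1 + ∑ c ∈ E, v c * ∏ i ∈ c, x i

/-- The choice probability set `C_G`. -/
def choiceSet (E : Finset (Finset (Fin N))) (v : Finset (Fin N) → ℝ) :
    Set (ℝ × ({e // e ∈ E} → ℝ)) :=
  {p | ∃ x : Fin N → ℝ, IsBinaryVec x ∧ p.1 = 1 / Dx E v x ∧
      ∀ e : {e // e ∈ E}, p.2 e = (∏ i ∈ e.1, x i) / Dx E v x}

/-- The monomial set `M_G`. -/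
def monoSet (E : Finset (Finset (Fin N))) : Set ({e // e ∈ E} → ℝ) :=
  {z | ∃ x : Fin N → ℝ, IsBinaryVec x ∧ ∀ e : {e // e ∈ E}, z e = ∏ i ∈ e.1, x i}

/-- An exact relaxation oracle: `R ⊆ [0,1]^E`, `M_G ⊆ R`, and every `z ∈ R` with binary
singleton coordinates is the corresponding monomial vector. -/
def IsExactOracle (E : Finset (Finset (Fin N)))
    (hsing : ∀ i : Fin N, ({i} : Finset (Fin N)) ∈ E)
    (R : Set ({e // e ∈ E} → ℝ)) : Prop :=
  (∀ z ∈ R, ∀ e : {e // e ∈ E}, z e ∈ Set.Icc (0 : ℝ) 1) ∧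
  monoSet E ⊆ R ∧
  (∀ z ∈ R, (∀ i : Fin N, z ⟨{i}, hsing i⟩ = 0 ∨ z ⟨{i}, hsing i⟩ = 1) →
    ∀ e : {e // e ∈ E}, z e = ∏ i ∈ e.1, z ⟨{i}, hsing i⟩)

/-- `L_i(ρ,y)`. -/
noncomputable def Lb (E : Finset (Finset (Fin N)))
    (hsing : ∀ i : Fin N, ({i} : Finset (Fin N)) ∈ E)
    (v : Finset (Fin N) → ℝ) (ρ : ℝ) (y : {e // e ∈ E} → ℝ) (i : Fin N) : ℝ :=
  y ⟨{i}, hsing i⟩ +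
    ∑ e ∈ E.attach, (if i ∈ e.1 then v e.1 * y e
      else v e.1 * max 0 (y ⟨{i}, hsing i⟩ + y e - ρ))

/-- `U_i(ρ,y)`. -/
noncomputable def Ub (E : Finset (Finset (Fin N)))
    (hsing : ∀ i : Fin N, ({i} : Finset (Fin N)) ∈ E)
    (v : Finset (Fin N) → ℝ) (ρ : ℝ) (y : {e // e ∈ E} → ℝ) (i : Fin N) : ℝ :=
  y ⟨{i}, hsing i⟩ +
    ∑ e ∈ E.attach, (if i ∈ e.1 then v e.1 * y e
      else v e.1 * min (y ⟨{i}, hsing i⟩) (y e))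

/-- The perspective system. -/
noncomputable def persSystem (E : Finset (Finset (Fin N)))
    (hsing : ∀ i : Fin N, ({i} : Finset (Fin N)) ∈ E)
    (v : Finset (Fin N) → ℝ) (R : Set ({e // e ∈ E} → ℝ)) :
    Set (ℝ × ({e // e ∈ E} → ℝ) × (Fin N → ℝ)) :=
  {p | 0 ≤ p.1 ∧ (∃ z ∈ R, p.2.1 = p.1 • z) ∧
      p.1 + ∑ e ∈ E.attach, v e.1 * p.2.1 e = 1 ∧
      ∀ i : Fin N, Lb E hsing v p.1 p.2.1 i ≤ p.2.2 i ∧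
        p.2.2 i ≤ Ub E hsing v p.1 p.2.1 i}

/-- Product of binary coordinates is binary. -/
lemma binary_prod {x : Fin N → ℝ} (hx : IsBinaryVec x) (s : Finset (Fin N)) :
    (∏ i ∈ s, x i) = 0 ∨ (∏ i ∈ s, x i) = 1 := by
  by_cases h : ∀ i ∈ s, x i = 1
  · exact Or.inr (Finset.prod_eq_one h)
  · push_neg at h
    obtain ⟨i, his, hi⟩ := h
    refine Or.inl (Finset.prod_eq_zero his ?_)
    rcases hx i with h0 | h1
    · exact h0
    · exact absurd h1 hi

lemma binary_prod_nonneg {x : Fin N → ℝ} (hx : IsBinaryVec x) (s : Finset (Fin N)) :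
    0 ≤ ∏ i ∈ s, x i := by
  rcases binary_prod hx s with h | h <;> rw [h] <;> norm_num

lemma binary_prod_le_one {x : Fin N → ℝ} (hx : IsBinaryVec x) (s : Finset (Fin N)) :
    (∏ i ∈ s, x i) ≤ 1 := by
  rcases binary_prod hx s with h | h <;> rw [h] <;> norm_num

lemma Dx_pos {E : Finset (Finset (Fin N))} {v : Finset (Fin N) → ℝ}
    (hv : ∀ e ∈ E, 0 < v e) {x : Fin N → ℝ} (hx : IsBinaryVec x) :
    0 < Dx E v x := by
  have : 0 ≤ ∑ c ∈ E, v c * ∏ i ∈ c, x i :=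
    Finset.sum_nonneg fun c hc =>
      mul_nonneg (hv c hc).le (binary_prod_nonneg hx c)
  unfold Dx; linarith

/-- **Theorem 1 (exactness part).** If `R ⊆ [0,1]^E` is an exact relaxation oracle for the
multi-purchase hypergraph `G = (V,E)`, then the projection onto the `(ρ,y)`-coordinates of the
set of triples `(ρ,y,x)` in the perspective system with binary `x` equals the choice
probability set `C_G`. -/
theorem perspective_formulation_exact
    (N : ℕ) (hN : 1 ≤ N)
    (E : Finset (Finset (Fin N)))
    (hne : ∀ e ∈ E, e.Nonempty)
    (hsing : ∀ i : Fin N, ({i} : Finset (Fin N)) ∈ E)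
    (v : Finset (Fin N) → ℝ) (hv : ∀ e ∈ E, 0 < v e)
    (R : Set ({e // e ∈ E} → ℝ))
    (hR : IsExactOracle E hsing R) :
    {p : ℝ × ({e // e ∈ E} → ℝ) |
        ∃ x : Fin N → ℝ, IsBinaryVec x ∧ (p.1, p.2, x) ∈ persSystem E hsing v R}
      = choiceSet E v := by
  obtain ⟨hR01, hRmono, hRexact⟩ := hR
  ext ⟨ρ, y⟩
  simp only [Set.mem_setOf_eq, choiceSet, persSystem]
  constructor
  · rintro ⟨x, hxbin, hρ0, ⟨z, hzR, hyz⟩, hsum, hbounds⟩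
    have hz01 : ∀ e : {e // e ∈ E}, 0 ≤ z e ∧ z e ≤ 1 := fun e => (hR01 z hzR e)
    have hye : ∀ e : {e // e ∈ E}, y e = ρ * z e := by
      intro e; rw [hyz]; simp [smul_eq_mul]
    -- ρ > 0
    have hρpos : 0 < ρ := by
      rcases lt_or_eq_of_le hρ0 with h | h
      · exact h
      · exfalso
        have : ∀ e ∈ E.attach, v e.1 * y e = 0 := by
          intro e _; rw [hye e, ← h]; ring
        rw [Finset.sum_congr rfl this] at hsum
        simp [← h] at hsum
    have hynn : ∀ e : {e // e ∈ E}, 0 ≤ y e := fun e => by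
      rw [hye e]; exact mul_nonneg hρpos.le (hz01 e).1
    have hyle : ∀ e : {e // e ∈ E}, y e ≤ ρ := fun e => by
      rw [hye e]
      calc ρ * z e ≤ ρ * 1 := by
            exact mul_le_mul_of_nonneg_left (hz01 e).2 hρpos.le
        _ = ρ := mul_one ρ
    -- singleton coordinates of z are binary
    have hbin : ∀ i : Fin N, z ⟨{i}, hsing i⟩ = 0 ∨ z ⟨{i}, hsing i⟩ = 1 := by
      intro i
      obtain ⟨hL, hU⟩ := hbounds i
      rcases hxbin i with h0 | h1
      · left
        have hterms : 0 ≤ ∑ e ∈ E.attach, (if i ∈ e.1 then v e.1 * y e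
            else v e.1 * max 0 (y ⟨{i}, hsing i⟩ + y e - ρ)) := by
          refine Finset.sum_nonneg fun e _ => ?_
          split_ifs
          · exact mul_nonneg (hv e.1 e.2).le (hynn e)
          · exact mul_nonneg (hv e.1 e.2).le (le_max_left 0 _)
        have hys : y ⟨{i}, hsing i⟩ ≤ 0 := by
          have := hL; rw [h0] at this; unfold Lb at this; linarith
        have : y ⟨{i}, hsing i⟩ = 0 := le_antisymm hys (hynn _)
        rw [hye _] at this
        exact (mul_eq_zero.mp this).resolve_left hρpos.ne'
      · right
        have hUb : Ub E hsing v ρ y i ≤ y ⟨{i}, hsing i⟩ +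
            ∑ e ∈ E.attach, v e.1 * y e := by
          unfold Ub
          gcongr with e he
          split_ifs
          · exact le_rfl
          · exact mul_le_mul_of_nonneg_left (min_le_right _ _) (hv e.1 e.2).le
        have h1U : (1 : ℝ) ≤ Ub E hsing v ρ y i := by rw [← h1]; exact hU
        have : ρ ≤ y ⟨{i}, hsing i⟩ := by linarith
        have heq : y ⟨{i}, hsing i⟩ = ρ := le_antisymm (hyle _) this
        rw [hye _] at heq
        have := mul_left_cancel₀ hρpos.ne' (heq.trans (mul_one ρ).symm)
        exact this
    have hmono := hRexact z hzR hbin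
    refine ⟨fun i => z ⟨{i}, hsing i⟩, hbin, ?_, ?_⟩
    · -- ρ = 1 / Dx
      have hsum' : ∑ c ∈ E, v c * ∏ i ∈ c, (fun j => z ⟨{j}, hsing j⟩) i
          = ∑ e ∈ E.attach, v e.1 * z e := by
        rw [← Finset.sum_attach E (fun c => v c * ∏ i ∈ c, z ⟨{i}, hsing i⟩)]
        exact Finset.sum_congr rfl fun e _ => by rw [← hmono e]
      have hkey : ρ * Dx E v (fun i => z ⟨{i}, hsing i⟩) = 1 := by
        unfold Dx
        rw [hsum', mul_add, mul_one, Finset.mul_sum, ← hsum]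
        congr 1
        exact Finset.sum_congr rfl fun e _ => by rw [hye e]; ring
      have hD0 : Dx E v (fun i => z ⟨{i}, hsing i⟩) ≠ 0 :=
        right_ne_zero_of_mul_eq_one hkey
      rw [eq_div_iff hD0]; exact hkey
    · intro e
      have hkey : ρ * Dx E v (fun i => z ⟨{i}, hsing i⟩) = 1 := by
        unfold Dx
        rw [← Finset.sum_attach E (fun c => v c * ∏ i ∈ c, z ⟨{i}, hsing i⟩),
          Finset.sum_congr rfl (fun e _ => by rw [← hmono e]),
          mul_add, mul_one, Finset.mul_sum, ← hsum]
        congr 1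
        exact Finset.sum_congr rfl fun e _ => by rw [hye e]; ring
      have hD0 : Dx E v (fun i => z ⟨{i}, hsing i⟩) ≠ 0 :=
        right_ne_zero_of_mul_eq_one hkey
      rw [← hmono e, hye e, eq_div_iff hD0]
      have hρD : ρ = 1 / Dx E v (fun i => z ⟨{i}, hsing i⟩) := by
        rw [eq_div_iff hD0]; exact hkey
      rw [hρD]; field_simp
  · rintro ⟨x, hxbin, hρ, hy⟩
    have hDpos := Dx_pos hv hxbin
    refine ⟨x, hxbin, ?_, ?_, ?_, ?_⟩
    · rw [hρ]; positivity
    · refine ⟨fun e => ∏ i ∈ e.1, x i, hRmono ⟨x, hxbin, fun _ => rfl⟩, ?_⟩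
      funext e
      simp only [Pi.smul_apply, smul_eq_mul]
      rw [hy e, hρ]; ring
    · have : ∑ e ∈ E.attach, v e.1 * y e
          = (∑ c ∈ E, v c * ∏ i ∈ c, x i) / Dx E v x := by
        rw [Finset.sum_div,
          ← Finset.sum_attach E (fun c => v c * (∏ i ∈ c, x i) / Dx E v x)]
        exact Finset.sum_congr rfl fun e _ => by rw [hy e]; ring
      rw [this, hρ]
      field_simp
      unfold Dx; ring
    · -- bounds
      have hsum1 : ρ + ∑ e ∈ E.attach, v e.1 * y e = 1 := by
        have : ∑ e ∈ E.attach, v e.1 * y e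
            = (∑ c ∈ E, v c * ∏ i ∈ c, x i) / Dx E v x := by
          rw [Finset.sum_div,
            ← Finset.sum_attach E (fun c => v c * (∏ i ∈ c, x i) / Dx E v x)]
          exact Finset.sum_congr rfl fun e _ => by rw [hy e]; ring
        rw [this, hρ]
        field_simp
        unfold Dx; ring
      intro i
      have hysing : y ⟨{i}, hsing i⟩ = x i / Dx E v x := by
        rw [hy ⟨{i}, hsing i⟩]; simp
      have hynn : ∀ e : {e // e ∈ E}, 0 ≤ y e := fun e => by
        rw [hy e]; exact div_nonneg (binary_prod_nonneg hxbin e.1) hDpos.le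
      have hyleρ : ∀ e : {e // e ∈ E}, y e ≤ ρ := fun e => by
        rw [hy e, hρ]
        gcongr
        exact binary_prod_le_one hxbin e.1
      rcases hxbin i with h0 | h1
      · -- x i = 0
        have hys0 : y ⟨{i}, hsing i⟩ = 0 := by rw [hysing, h0]; simp
        constructor
        · unfold Lb
          rw [hys0, h0]
          have : ∀ e ∈ E.attach, (if i ∈ e.1 then v e.1 * y e
              else v e.1 * max 0 ((0:ℝ) + y e - ρ)) = 0 := by
            intro e _
            split_ifs with hie
            · have : (∏ j ∈ e.1, x j) = 0 :=
                Finset.prod_eq_zero hie h0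
              rw [hy e, this]; simp
            · have : max 0 ((0:ℝ) + y e - ρ) = 0 :=
                max_eq_left (by linarith [hyleρ e])
              rw [this]; ring
          rw [Finset.sum_congr rfl this]
          simp
        · unfold Ub
          rw [hys0, h0]
          have : ∀ e ∈ E.attach, (if i ∈ e.1 then v e.1 * y e
              else v e.1 * min (0:ℝ) (y e)) = 0 := by
            intro e _
            split_ifs with hie
            · have : (∏ j ∈ e.1, x j) = 0 :=
                Finset.prod_eq_zero hie h0
              rw [hy e, this]; simp
            · have : min (0:ℝ) (y e) = 0 := min_eq_left (hynn e)
              rw [this]; ring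
          rw [Finset.sum_congr rfl this]
          simp
      · -- x i = 1
        have hysρ : y ⟨{i}, hsing i⟩ = ρ := by rw [hysing, h1, hρ]
        constructor
        · unfold Lb
          rw [hysρ, h1]
          have : ∀ e ∈ E.attach, (if i ∈ e.1 then v e.1 * y e
              else v e.1 * max 0 (ρ + y e - ρ)) = v e.1 * y e := by
            intro e _
            split_ifs with hie
            · rfl
            · have : max 0 (ρ + y e - ρ) = y e := by
                rw [max_eq_right (by linarith [hynn e])]; ring
              rw [this]
          rw [Finset.sum_congr rfl this]
          linarith [hsum1]
        · unfold Ub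
          rw [hysρ, h1]
          have : ∀ e ∈ E.attach, (if i ∈ e.1 then v e.1 * y e
              else v e.1 * min ρ (y e)) = v e.1 * y e := by
            intro e _
            split_ifs with hie
            · rfl
            · rw [min_eq_right (hyleρ e)]
          rw [Finset.sum_congr rfl this]
          linarith [hsum1]
end

section
/- Let x ∈ {0,1}^V and let (ρ,y) be the induced choice probabilities, i.e. ρ = 1/D(x) and y_e = (∏_{i∈e} x_i)/D(x) for all e ∈ E. Then L_i(ρ,y) = U_i(ρ,y) = x_i for every i ∈ V. -/
open Finset

variable {N : ℕ}

/-- For a binary assortment `x` and its induced choice probabilities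
`ρ = 1/D(x)`, `y_e = (∏_{i∈e} x_i)/D(x)`, the bounds collapse: `L_i(ρ,y) = U_i(ρ,y) = x_i`
for every product `i`. -/
theorem LU_collapse_at_choice_probabilities
    (N : ℕ) (hN : 1 ≤ N)
    (E : Finset (Finset (Fin N)))
    (hne : ∀ e ∈ E, e.Nonempty)
    (hsing : ∀ i : Fin N, ({i} : Finset (Fin N)) ∈ E)
    (v : Finset (Fin N) → ℝ) (hv : ∀ e ∈ E, 0 < v e)
    (x : Fin N → ℝ) (hx : IsBinaryVec x)
    (ρ : ℝ) (y : {e // e ∈ E} → ℝ)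
    (hρ : ρ = 1 / Dx E v x)
    (hy : ∀ e : {e // e ∈ E}, y e = (∏ i ∈ e.1, x i) / Dx E v x) :
    ∀ i : Fin N, Lb E hsing v ρ y i = x i ∧ Ub E hsing v ρ y i = x i := by
  intro i
  have hD : 0 < Dx E v x := by
    have hnn : ∀ c ∈ E, 0 ≤ v c * ∏ j ∈ c, x j := by
      intro c hc
      have h1 : 0 ≤ v c := (hv c hc).le
      have h2 : 0 ≤ ∏ j ∈ c, x j :=
        Finset.prod_nonneg (fun j _ => by rcases hx j with h|h <;> simp [h])
      positivity
    have := Finset.sum_nonneg hnn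
    unfold Dx; linarith
  have hP01 : ∀ e : Finset (Fin N), (∏ j ∈ e, x j) = 0 ∨ (∏ j ∈ e, x j) = 1 := by
    intro e
    refine Finset.induction_on e ?_ ?_
    · right; simp
    · intro a s h ih
      rw [Finset.prod_insert h]
      rcases hx a with ha|ha <;> rcases ih with hs|hs <;> simp [ha, hs]
  have hyle : ∀ e : {e // e ∈ E}, y e ≤ 1 / Dx E v x := by
    intro e
    rw [hy]
    have h1 : (∏ j ∈ e.1, x j) ≤ 1 := by rcases hP01 e.1 with h|h <;> simp [h]
    gcongr
  have hynn : ∀ e : {e // e ∈ E}, 0 ≤ y e := by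
    intro e
    rw [hy]
    have : (0:ℝ) ≤ ∏ j ∈ e.1, x j := by rcases hP01 e.1 with h|h <;> simp [h]
    positivity
  rcases hx i with hxi | hxi
  · have hyi : y ⟨{i}, hsing i⟩ = 0 := by rw [hy]; simp [hxi]
    have htL : ∀ e ∈ E.attach,
        (if i ∈ e.1 then v e.1 * y e
          else v e.1 * max 0 (y ⟨{i}, hsing i⟩ + y e - ρ)) = 0 := by
      intro e _
      by_cases h : i ∈ e.1
      · have hye : y e = 0 := by rw [hy, Finset.prod_eq_zero h hxi]; simp
        simp [h, hye]
      · have h1 : y ⟨{i}, hsing i⟩ + y e - ρ ≤ 0 := by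
          have := hyle e; rw [hρ, hyi]; linarith
        simp [h, max_eq_left h1]
    have htU : ∀ e ∈ E.attach,
        (if i ∈ e.1 then v e.1 * y e
          else v e.1 * min (y ⟨{i}, hsing i⟩) (y e)) = 0 := by
      intro e _
      by_cases h : i ∈ e.1
      · have hye : y e = 0 := by rw [hy, Finset.prod_eq_zero h hxi]; simp
        simp [h, hye]
      · simp [h, hyi, min_eq_left (hynn e)]
    constructor
    · rw [Lb, Finset.sum_congr rfl htL]; simp [hyi, hxi]
    · rw [Ub, Finset.sum_congr rfl htU]; simp [hyi, hxi]
  · have hyi : y ⟨{i}, hsing i⟩ = ρ := by rw [hy, hρ]; simp [hxi]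
    have hsum : ∑ e ∈ E.attach, v e.1 * y e
        = (∑ c ∈ E, v c * ∏ j ∈ c, x j) / Dx E v x := by
      rw [← Finset.sum_attach E (fun c => v c * ∏ j ∈ c, x j), Finset.sum_div]
      exact Finset.sum_congr rfl (fun e _ => by rw [hy, mul_div_assoc])
    have htL : ∀ e ∈ E.attach,
        (if i ∈ e.1 then v e.1 * y e
          else v e.1 * max 0 (y ⟨{i}, hsing i⟩ + y e - ρ)) = v e.1 * y e := by
      intro e _
      by_cases h : i ∈ e.1
      · simp [h]
      · have : y ⟨{i}, hsing i⟩ + y e - ρ = y e := by rw [hyi]; ring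
        simp [h, this, max_eq_right (hynn e)]
    have htU : ∀ e ∈ E.attach,
        (if i ∈ e.1 then v e.1 * y e
          else v e.1 * min (y ⟨{i}, hsing i⟩) (y e)) = v e.1 * y e := by
      intro e _
      by_cases h : i ∈ e.1
      · simp [h]
      · have := hyle e
        rw [← hρ] at this
        simp [h, hyi, min_eq_right this]
    have hone : ρ + ∑ e ∈ E.attach, v e.1 * y e = 1 := by
      rw [hsum, hρ]
      have hD' : Dx E v x ≠ 0 := ne_of_gt hD
      field_simp
      unfold Dx; ring
    constructor
    · rw [Lb, Finset.sum_congr rfl htL, hyi, hone, hxi]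
    · rw [Ub, Finset.sum_congr rfl htU, hyi, hone, hxi]
end

section
/- Let ρ ≥ 0 and y ∈ ℝ^E satisfy 0 ≤ y_e ≤ ρ for all e ∈ E and ρ + Σ_{e∈E} v_e y_e = 1, and let x ∈ {0,1}^V satisfy L_i(ρ,y) ≤ x_i ≤ U_i(ρ,y) for every i ∈ V. Then y_{{i}} = ρ·x_i for every i ∈ V. -/
open Finset

variable {N : ℕ}

/-- If `ρ ≥ 0`, `0 ≤ y_e ≤ ρ` for all bundles, `ρ + Σ_e v_e y_e = 1`, and a binary `x`
satisfies `L_i(ρ,y) ≤ x_i ≤ U_i(ρ,y)` for every `i`, then `y_{{i}} = ρ·x_i` for every `i`. -/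
theorem singleton_probability_identity
    (N : ℕ) (hN : 1 ≤ N)
    (E : Finset (Finset (Fin N)))
    (hne : ∀ e ∈ E, e.Nonempty)
    (hsing : ∀ i : Fin N, ({i} : Finset (Fin N)) ∈ E)
    (v : Finset (Fin N) → ℝ) (hv : ∀ e ∈ E, 0 < v e)
    (ρ : ℝ) (y : {e // e ∈ E} → ℝ) (x : Fin N → ℝ)
    (hρ : 0 ≤ ρ)
    (hybd : ∀ e : {e // e ∈ E}, 0 ≤ y e ∧ y e ≤ ρ)
    (hsum : ρ + ∑ e ∈ E.attach, v e.1 * y e = 1)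
    (hx : IsBinaryVec x)
    (hLU : ∀ i : Fin N, Lb E hsing v ρ y i ≤ x i ∧ x i ≤ Ub E hsing v ρ y i) :
    ∀ i : Fin N, y ⟨{i}, hsing i⟩ = ρ * x i := by
  intro i
  have hv' : ∀ e : {e // e ∈ E}, 0 < v e.1 := fun e => hv e.1 e.2
  set t := y ⟨{i}, hsing i⟩ with ht
  have ht0 : 0 ≤ t := (hybd ⟨{i}, hsing i⟩).1
  rcases hx i with h0 | h1
  · -- x i = 0
    have hL := (hLU i).1
    rw [h0] at hL
    have hsn : 0 ≤ ∑ e ∈ E.attach, (if i ∈ e.1 then v e.1 * y e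
        else v e.1 * max 0 (t + y e - ρ)) := by
      apply Finset.sum_nonneg
      intro e _
      split
      · exact mul_nonneg (hv' e).le (hybd e).1
      · exact mul_nonneg (hv' e).le (le_max_left 0 _)
    unfold Lb at hL
    rw [h0]
    simp only [← ht] at hL
    linarith
  · have hL := (hLU i).1
    have hU := (hLU i).2
    rw [h1] at hL hU
    -- upper bound on Ub gives t ≥ ρ
    have hUle : ∀ e ∈ E.attach,
        (if i ∈ e.1 then v e.1 * y e else v e.1 * min t (y e)) ≤ v e.1 * y e := by
      intro e _
      split
      · exact le_refl _
      · exact mul_le_mul_of_nonneg_left (min_le_right _ _) (hv' e).le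
    have hUle' := Finset.sum_le_sum hUle
    unfold Ub at hU
    simp only [← ht] at hU
    have htρ1 : ρ ≤ t := by linarith
    -- lower bound on Lb gives t ≤ ρ
    have hLge : ∀ e ∈ E.attach,
        v e.1 * y e + (if i ∈ e.1 then 0 else v e.1) * (t - ρ) ≤
        (if i ∈ e.1 then v e.1 * y e else v e.1 * max 0 (t + y e - ρ)) := by
      intro e _
      split
      · simp
      · have : v e.1 * (t + y e - ρ) ≤ v e.1 * max 0 (t + y e - ρ) :=
          mul_le_mul_of_nonneg_left (le_max_right _ _) (hv' e).le
        nlinarith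
    have hLge' := Finset.sum_le_sum hLge
    rw [Finset.sum_add_distrib, ← Finset.sum_mul] at hLge'
    set S := ∑ e ∈ E.attach, (if i ∈ e.1 then (0:ℝ) else v e.1) with hS
    have hS0 : 0 ≤ S := by
      apply Finset.sum_nonneg
      intro e _
      split
      · exact le_refl _
      · exact (hv' e).le
    unfold Lb at hL
    simp only [← ht] at hL
    have htρ2 : t ≤ ρ := by nlinarith
    rw [h1]
    linarith
end

section
/- For any R ⊆ [0,1]^E, the projection onto the (ρ,y)-coordinates of the set of triples (ρ,y,x) in the perspective system with x ∈ [0,1]^V equals {(ρ,y) ∈ ℝ × ℝ^E : ρ ≥ 0, y ∈ ρ·R, ρ + Σ_{e∈E} v_e y_e = 1}; that is, eliminating the x-variables from the continuous relaxation of the perspective system imposes no additional constraints on (ρ,y). In particular, every (ρ,y) with ρ ≥ 0, 0 ≤ y_e ≤ ρ for all e, and ρ + Σ_{e∈E} v_e y_e = 1 satisfies max{0, L_i(ρ,y)} ≤ min{1, U_i(ρ,y)} for every i ∈ V. -/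
open Finset

variable {N : ℕ}

/-!
Take `x_i = max {0, L_i(ρ,y)}`. If `y = ρ z` with `z ∈ [0,1]^E`, then `0 ≤ y_e ≤ ρ` for every `e`,
so each summand of `L_i` is squeezed termwise: `0 ≤ max {0, y_i + y_e - ρ} ≤ min {y_i, y_e}`,
which gives `L_i ≤ U_i` and `0 ≤ U_i`, while `max {0, y_i + y_e - ρ} ≤ y_e` together with
`ρ + Σ_e v_e y_e = 1` gives `L_i ≤ y_i + 1 - ρ ≤ 1`.
-/

lemma mul_mem_Icc_of_mem_unitInterval {ρ t : ℝ} (hρ : 0 ≤ ρ) (ht : t ∈ Set.Icc (0 : ℝ) 1) :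
    ρ * t ∈ Set.Icc 0 ρ :=
  ⟨mul_nonneg hρ ht.1, mul_le_of_le_one_right hρ ht.2⟩

lemma max_zero_add_sub_le_min {a b ρ : ℝ} (ha : 0 ≤ a) (haρ : a ≤ ρ) (hb : 0 ≤ b)
    (hbρ : b ≤ ρ) : max 0 (a + b - ρ) ≤ min a b :=
  max_le (le_min ha hb) (le_min (by linarith) (by linarith))

section PerspectiveBounds

variable {N : ℕ} {E : Finset (Finset (Fin N))} (hsing : ∀ i : Fin N, ({i} : Finset (Fin N)) ∈ E)
  {v : Finset (Fin N) → ℝ} {ρ : ℝ} {y : {e // e ∈ E} → ℝ}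

lemma Lb_le_Ub (hv : ∀ e ∈ E, 0 ≤ v e) (hy : ∀ e, 0 ≤ y e ∧ y e ≤ ρ) (i : Fin N) :
    Lb E hsing v ρ y i ≤ Ub E hsing v ρ y i := by
  refine add_le_add le_rfl (Finset.sum_le_sum fun e _ => ?_)
  split_ifs
  · exact le_rfl
  · exact mul_le_mul_of_nonneg_left
      (max_zero_add_sub_le_min (hy _).1 (hy _).2 (hy e).1 (hy e).2) (hv e.1 e.2)

lemma Ub_nonneg (hv : ∀ e ∈ E, 0 ≤ v e) (hy : ∀ e, 0 ≤ y e) (i : Fin N) :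
    0 ≤ Ub E hsing v ρ y i := by
  refine add_nonneg (hy _) (Finset.sum_nonneg fun e _ => ?_)
  split_ifs
  · exact mul_nonneg (hv e.1 e.2) (hy e)
  · exact mul_nonneg (hv e.1 e.2) (le_min (hy _) (hy e))

lemma Lb_le_one (hv : ∀ e ∈ E, 0 ≤ v e) (hy : ∀ e, 0 ≤ y e ∧ y e ≤ ρ)
    (hsum : ρ + ∑ e ∈ E.attach, v e.1 * y e = 1) (i : Fin N) :
    Lb E hsing v ρ y i ≤ 1 := by
  have hterm : ∀ e ∈ E.attach, (if i ∈ e.1 then v e.1 * y e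
      else v e.1 * max 0 (y ⟨{i}, hsing i⟩ + y e - ρ)) ≤ v e.1 * y e := fun e _ => by
    split_ifs
    · exact le_rfl
    · exact mul_le_mul_of_nonneg_left (max_le (hy e).1 (by linarith [(hy ⟨{i}, hsing i⟩).2]))
        (hv e.1 e.2)
  have hsum_le := Finset.sum_le_sum hterm
  unfold Lb
  linarith [(hy ⟨{i}, hsing i⟩).2]

lemma max_zero_Lb_le_min_one_Ub (hv : ∀ e ∈ E, 0 ≤ v e) (hy : ∀ e, 0 ≤ y e ∧ y e ≤ ρ)
    (hsum : ρ + ∑ e ∈ E.attach, v e.1 * y e = 1) (i : Fin N) :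
    max 0 (Lb E hsing v ρ y i) ≤ min 1 (Ub E hsing v ρ y i) :=
  max_le (le_min zero_le_one (Ub_nonneg hsing hv (fun e => (hy e).1) i))
    (le_min (Lb_le_one hsing hv hy hsum i) (Lb_le_Ub hsing hv hy i))

end PerspectiveBounds

theorem perspective_projection_no_extra_constraints_general
    (N : ℕ)
    (E : Finset (Finset (Fin N)))
    (hsing : ∀ i : Fin N, ({i} : Finset (Fin N)) ∈ E)
    (v : Finset (Fin N) → ℝ) (hv : ∀ e ∈ E, 0 < v e)
    (R : Set ({e // e ∈ E} → ℝ))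
    (hR01 : ∀ z ∈ R, ∀ e : {e // e ∈ E}, z e ∈ Set.Icc (0 : ℝ) 1) :
    ({p : ℝ × ({e // e ∈ E} → ℝ) |
        ∃ x : Fin N → ℝ, (∀ i, x i ∈ Set.Icc (0 : ℝ) 1) ∧
          (p.1, p.2, x) ∈ persSystem E hsing v R}
      = {p : ℝ × ({e // e ∈ E} → ℝ) |
          0 ≤ p.1 ∧ (∃ z ∈ R, p.2 = p.1 • z) ∧
          p.1 + ∑ e ∈ E.attach, v e.1 * p.2 e = 1}) ∧
    (∀ (ρ : ℝ) (y : {e // e ∈ E} → ℝ), 0 ≤ ρ →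
      (∀ e : {e // e ∈ E}, 0 ≤ y e ∧ y e ≤ ρ) →
      ρ + ∑ e ∈ E.attach, v e.1 * y e = 1 →
      ∀ i : Fin N, max 0 (Lb E hsing v ρ y i) ≤ min 1 (Ub E hsing v ρ y i)) := by
  have hv₀ : ∀ e ∈ E, 0 ≤ v e := fun e he => (hv e he).le
  refine ⟨Set.ext fun ⟨ρ, y⟩ => ⟨fun ⟨_, _, h₀, hz, hsum, _⟩ => ⟨h₀, hz, hsum⟩, ?_⟩,
    fun ρ y _ hy hsum i => max_zero_Lb_le_min_one_Ub hsing hv₀ hy hsum i⟩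
  rintro ⟨hρ, ⟨z, hzR, hzy⟩, hsum⟩
  dsimp only at hρ hzy hsum
  subst hzy
  have hy : ∀ e, 0 ≤ (ρ • z) e ∧ (ρ • z) e ≤ ρ := fun e =>
    mul_mem_Icc_of_mem_unitInterval hρ (hR01 z hzR e)
  have hbox := max_zero_Lb_le_min_one_Ub hsing hv₀ hy hsum
  refine ⟨fun i => max 0 (Lb E hsing v ρ (ρ • z) i), fun i => ?_, hρ, ⟨z, hzR, rfl⟩, hsum,
    fun i => ⟨le_max_right _ _, (hbox i).trans (min_le_right _ _)⟩⟩
  exact ⟨le_max_left _ _, (hbox i).trans (min_le_left _ _)⟩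

/-- Eliminating `x` from the continuous relaxation of the perspective system imposes no
additional constraint on `(ρ,y)`: the projection equals
`{(ρ,y) : ρ ≥ 0, y ∈ ρ·R, ρ + Σ_e v_e y_e = 1}`.  In particular, every `(ρ,y)` with
`ρ ≥ 0`, `0 ≤ y_e ≤ ρ`, and `ρ + Σ_e v_e y_e = 1` satisfies
`max{0, L_i(ρ,y)} ≤ min{1, U_i(ρ,y)}` for every `i`. -/
theorem perspective_projection_no_extra_constraints
    (N : ℕ) (hN : 1 ≤ N)
    (E : Finset (Finset (Fin N)))
    (hne : ∀ e ∈ E, e.Nonempty)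
    (hsing : ∀ i : Fin N, ({i} : Finset (Fin N)) ∈ E)
    (v : Finset (Fin N) → ℝ) (hv : ∀ e ∈ E, 0 < v e)
    (R : Set ({e // e ∈ E} → ℝ))
    (hR01 : ∀ z ∈ R, ∀ e : {e // e ∈ E}, z e ∈ Set.Icc (0 : ℝ) 1) :
    ({p : ℝ × ({e // e ∈ E} → ℝ) |
        ∃ x : Fin N → ℝ, (∀ i, x i ∈ Set.Icc (0 : ℝ) 1) ∧
          (p.1, p.2, x) ∈ persSystem E hsing v R}
      = {p : ℝ × ({e // e ∈ E} → ℝ) |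
          0 ≤ p.1 ∧ (∃ z ∈ R, p.2 = p.1 • z) ∧
          p.1 + ∑ e ∈ E.attach, v e.1 * p.2 e = 1}) ∧
    (∀ (ρ : ℝ) (y : {e // e ∈ E} → ℝ), 0 ≤ ρ →
      (∀ e : {e // e ∈ E}, 0 ≤ y e ∧ y e ≤ ρ) →
      ρ + ∑ e ∈ E.attach, v e.1 * y e = 1 →
      ∀ i : Fin N, max 0 (Lb E hsing v ρ y i) ≤ min 1 (Ub E hsing v ρ y i)) :=
  perspective_projection_no_extra_constraints_general N E hsing v hv R hR01
end

section
/- Let k ≥ 1, x ∈ [0,1]^k, and z ∈ ℝ^k satisfy z_1 = x_1 and, for every 2 ≤ m ≤ k, max{0, z_{m−1} + x_m − 1} ≤ z_m ≤ min{z_{m−1}, x_m}. Then z_k ≥ Σ_{j=1}^k x_j − (k − 1), and z_k ≤ x_j for every 1 ≤ j ≤ k; that is, the standard linear relaxation inequalities of the multilinear term are implied by the recursive McCormick inequalities. (Lemma EC.1, chain form.) -/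
open Finset

/-- **Lemma EC.1 (chain form).** The standard linear relaxation inequalities of the
multilinear term are implied by the recursive McCormick inequalities: if `x ∈ [0,1]^k`,
`z_1 = x_1`, and for every `2 ≤ m ≤ k` the envelope
`max{0, z_{m−1} + x_m − 1} ≤ z_m ≤ min{z_{m−1}, x_m}` holds, then
`z_k ≥ Σ_{j=1}^k x_j − (k − 1)` and `z_k ≤ x_j` for every `1 ≤ j ≤ k`. -/
theorem recursive_mccormick_implies_standard_relaxation
    (k : ℕ) (hk : 1 ≤ k) (x z : ℕ → ℝ)
    (hx : ∀ j, 1 ≤ j → j ≤ k → 0 ≤ x j ∧ x j ≤ 1)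
    (hz1 : z 1 = x 1)
    (hchain : ∀ m, 2 ≤ m → m ≤ k →
      max 0 (z (m - 1) + x m - 1) ≤ z m ∧ z m ≤ min (z (m - 1)) (x m)) :
    ((∑ j ∈ Finset.Icc 1 k, x j) - ((k : ℝ) - 1) ≤ z k) ∧
    (∀ j, 1 ≤ j → j ≤ k → z k ≤ x j) := by
  have key : ∀ m, 1 ≤ m → m ≤ k →
      ((∑ j ∈ Finset.Icc 1 m, x j) - ((m : ℝ) - 1) ≤ z m) ∧
      (∀ j, 1 ≤ j → j ≤ m → z m ≤ x j) := by
    intro m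
    induction m with
    | zero => intro h; omega
    | succ n ih =>
      intro h1 hle
      rcases Nat.eq_or_lt_of_le (Nat.one_le_iff_ne_zero.mpr (by omega) : 1 ≤ n + 1) with h | h
      · -- n + 1 = 1
        have hn : n = 0 := by omega
        subst hn
        constructor
        · simp [hz1]
        · intro j hj1 hj2
          have : j = 1 := by omega
          simp [this, hz1]
      · -- n ≥ 1
        have hn1 : 1 ≤ n := by omega
        have hnk : n ≤ k := by omega
        obtain ⟨ihL, ihU⟩ := ih hn1 hnk
        have hc := hchain (n + 1) (by omega) hle
        simp only [Nat.add_sub_cancel] at hc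
        obtain ⟨hlo, hhi⟩ := hc
        have hlo' : z n + x (n + 1) - 1 ≤ z (n + 1) := le_trans (le_max_right _ _) hlo
        constructor
        · rw [Finset.sum_Icc_succ_top (by omega : 1 ≤ n + 1)]
          push_cast
          linarith
        · intro j hj1 hj2
          rcases Nat.lt_or_ge j (n + 1) with hj | hj
          · have := ihU j hj1 (by omega)
            exact le_trans hhi ((min_le_left _ _).trans this)
          · have : j = n + 1 := by omega
            subst this
            exact hhi.trans (min_le_right _ _)
  exact key k hk le_rfl
end

section
/- For any set R ⊆ [0,1]^E: if (ρ,y) lies in the projection onto the (ρ,y)-coordinates of the continuous relaxation of the perspective system (x ∈ [0,1]^V), then (ρ,y) also lies in the projection onto the (ρ,y)-coordinates of the continuous relaxation of the Big-M system (x ∈ [0,1]^V). That is, R_pers ⊆ R_BigM. (Theorem 2.) -/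
open Finset

variable {N : ℕ}

/-- The Big-M system (with bounds `ρ_L = 0`, `ρ_U = 1`): tuples `(ρ, y, z, x)` with
`ρ ≥ 0`, `ρ + Σ_e v_e y_e = 1`, `z ∈ R`, `z_{{i}} = x_i`, and
`max{0, z_e + ρ − 1} ≤ y_e ≤ min{ρ, z_e}` for all `e ∈ E`. -/
def bigMSystem (E : Finset (Finset (Fin N)))
    (hsing : ∀ i : Fin N, ({i} : Finset (Fin N)) ∈ E)
    (v : Finset (Fin N) → ℝ) (R : Set ({e // e ∈ E} → ℝ)) :
    Set (ℝ × ({e // e ∈ E} → ℝ) × ({e // e ∈ E} → ℝ) × (Fin N → ℝ)) :=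
  {p | 0 ≤ p.1 ∧ p.1 + ∑ e ∈ E.attach, v e.1 * p.2.1 e = 1 ∧
      p.2.2.1 ∈ R ∧ (∀ i : Fin N, p.2.2.1 ⟨{i}, hsing i⟩ = p.2.2.2 i) ∧
      ∀ e : {e // e ∈ E}, max 0 (p.2.2.1 e + p.1 - 1) ≤ p.2.1 e ∧
        p.2.1 e ≤ min p.1 (p.2.2.1 e)}

/-- **Theorem 2.** For any relaxation oracle `R ⊆ [0,1]^E`, the projection of the continuous
relaxation of the perspective system onto the `(ρ,y)`-coordinates is contained in that of the
Big-M system: `R_pers ⊆ R_BigM`. -/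
theorem pers_relaxation_subset_bigM_relaxation
    (N : ℕ) (hN : 1 ≤ N)
    (E : Finset (Finset (Fin N)))
    (hne : ∀ e ∈ E, e.Nonempty)
    (hsing : ∀ i : Fin N, ({i} : Finset (Fin N)) ∈ E)
    (v : Finset (Fin N) → ℝ) (hv : ∀ e ∈ E, 0 < v e)
    (R : Set ({e // e ∈ E} → ℝ))
    (hR01 : ∀ z ∈ R, ∀ e : {e // e ∈ E}, z e ∈ Set.Icc (0 : ℝ) 1) :
    {p : ℝ × ({e // e ∈ E} → ℝ) |
        ∃ x : Fin N → ℝ, (∀ i, x i ∈ Set.Icc (0 : ℝ) 1) ∧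
          (p.1, p.2, x) ∈ persSystem E hsing v R}
      ⊆ {p : ℝ × ({e // e ∈ E} → ℝ) |
          ∃ (z : {e // e ∈ E} → ℝ) (x : Fin N → ℝ),
            (∀ i, x i ∈ Set.Icc (0 : ℝ) 1) ∧
            (p.1, p.2, z, x) ∈ bigMSystem E hsing v R} := by
  rintro ⟨ρ, y⟩ ⟨x, hx01, hρ0, ⟨z, hzR, hy⟩, hsum, hLU⟩
  dsimp only at hρ0 hy hsum ⊢
  subst hy
  have hz01 : ∀ e : {e // e ∈ E}, z e ∈ Set.Icc (0:ℝ) 1 := hR01 z hzR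
  have hρ1 : ρ ≤ 1 := by
    have hnn : 0 ≤ ∑ e ∈ E.attach, v e.1 * (ρ • z) e := by
      apply Finset.sum_nonneg
      intro e _
      have := (hz01 e).1
      have hve := (hv e.1 e.2).le
      simp only [Pi.smul_apply, smul_eq_mul]
      positivity
    linarith
  refine ⟨z, fun i => z ⟨{i}, hsing i⟩, fun i => hz01 _, hρ0, hsum, hzR, fun i => rfl, ?_⟩
  intro e
  have h0 := (hz01 e).1
  have h1 := (hz01 e).2
  simp only [Pi.smul_apply, smul_eq_mul]
  constructor
  · apply max_le
    · positivity
    · nlinarith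
  · apply le_min
    · nlinarith
    · nlinarith
end

section
/- Let R ⊆ [0,1]^E be an exact relaxation oracle for the multi-purchase hypergraph G = (V,E). Then the projection onto the (ρ,y)-coordinates of the set of tuples (ρ,y,z,x) in the Big-M system with x ∈ {0,1}^V equals the choice probability set C_G. (Proposition 4.) -/
open Finset

variable {N : ℕ}

/-! Once `x` is binary, exactness of `R` forces `z` to be the monomial vector of `x`, so every
`z_e` is `0` or `1`. For binary `z_e` and `0 ≤ ρ ≤ 1` the McCormick bounds
`max{0, z_e + ρ - 1} ≤ y_e ≤ min{ρ, z_e}` say exactly `y_e = ρ z_e`, and then the normalisation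
`ρ + Σ v_e y_e = 1` reads `ρ D(x) = 1`. -/

lemma IsBinaryVec.prod_eq_zero_or_one {α : Type*} {x : α → ℝ} (hx : IsBinaryVec x)
    (s : Finset α) : ∏ i ∈ s, x i = 0 ∨ ∏ i ∈ s, x i = 1 :=
  Finset.prod_induction x (fun a => a = 0 ∨ a = 1)
    (by rintro a b (rfl | rfl) (rfl | rfl) <;> simp) (Or.inr rfl) (fun i _ => hx i)

lemma eq_mul_of_mcCormick {ρ y z : ℝ} (hz : z = 0 ∨ z = 1)
    (h : max 0 (z + ρ - 1) ≤ y ∧ y ≤ min ρ z) : y = ρ * z := by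
  obtain ⟨hlo, hhi⟩ := h
  rcases hz with rfl | rfl
  · linarith [le_max_left 0 (0 + ρ - 1), min_le_right ρ 0]
  · linarith [le_max_right 0 (1 + ρ - 1), min_le_left ρ 1]

lemma mcCormick_of_eq_mul {ρ z : ℝ} (hz : z = 0 ∨ z = 1) (hρ0 : 0 ≤ ρ) (hρ1 : ρ ≤ 1) :
    max 0 (z + ρ - 1) ≤ ρ * z ∧ ρ * z ≤ min ρ z := by
  rcases hz with rfl | rfl <;> simp [hρ0, hρ1]

lemma one_le_Dx (E : Finset (Finset (Fin N))) {v : Finset (Fin N) → ℝ}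
    (hv : ∀ e ∈ E, 0 ≤ v e) {x : Fin N → ℝ} (hx : IsBinaryVec x) : 1 ≤ Dx E v x := by
  have hprod : ∀ c, 0 ≤ ∏ i ∈ c, x i := fun c => by
    rcases hx.prod_eq_zero_or_one c with h | h <;> simp [h]
  exact le_add_of_nonneg_right (sum_nonneg fun c hc => mul_nonneg (hv c hc) (hprod c))

lemma add_sum_mul_prod_eq_mul_Dx (E : Finset (Finset (Fin N))) (v : Finset (Fin N) → ℝ)
    (x : Fin N → ℝ) (ρ : ℝ) :
    ρ + ∑ e ∈ E.attach, v e.1 * (ρ * ∏ i ∈ e.1, x i) = ρ * Dx E v x := by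
  rw [sum_attach E fun c => v c * (ρ * ∏ i ∈ c, x i), Dx, mul_add, mul_one, mul_sum]
  exact congrArg _ (sum_congr rfl fun _ _ => by ring)

lemma IsExactOracle.eq_prod {E : Finset (Finset (Fin N))}
    {hsing : ∀ i : Fin N, ({i} : Finset (Fin N)) ∈ E} {R : Set ({e // e ∈ E} → ℝ)}
    (hR : IsExactOracle E hsing R) {z : {e // e ∈ E} → ℝ} {x : Fin N → ℝ} (hzR : z ∈ R)
    (hx : IsBinaryVec x) (hzx : ∀ i, z ⟨{i}, hsing i⟩ = x i) (e : {e // e ∈ E}) :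
    z e = ∏ i ∈ e.1, x i := by
  rw [hR.2.2 z hzR (fun i => hzx i ▸ hx i) e]
  exact prod_congr rfl fun i _ => hzx i

theorem bigM_formulation_exact_general
    (N : ℕ)
    (E : Finset (Finset (Fin N)))
    (hsing : ∀ i : Fin N, ({i} : Finset (Fin N)) ∈ E)
    (v : Finset (Fin N) → ℝ) (hv : ∀ e ∈ E, 0 < v e)
    (R : Set ({e // e ∈ E} → ℝ))
    (hR : IsExactOracle E hsing R) :
    {p : ℝ × ({e // e ∈ E} → ℝ) |
        ∃ (z : {e // e ∈ E} → ℝ) (x : Fin N → ℝ),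
          IsBinaryVec x ∧ (p.1, p.2, z, x) ∈ bigMSystem E hsing v R}
      = choiceSet E v := by
  ext ⟨ρ, y⟩
  simp only [Set.mem_ofPred_eq, choiceSet, bigMSystem]
  constructor
  · rintro ⟨z, x, hx, -, hsum, hzR, hzx, hbnd⟩
    have hy : ∀ e, y e = ρ * ∏ i ∈ e.1, x i := fun e =>
      eq_mul_of_mcCormick (hx.prod_eq_zero_or_one e.1) (hR.eq_prod hzR hx hzx e ▸ hbnd e)
    have hD : ρ * Dx E v x = 1 := by
      rw [← add_sum_mul_prod_eq_mul_Dx, ← hsum]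
      simp only [hy]
    have hρ : ρ = 1 / Dx E v x := eq_one_div_of_mul_eq_one_left hD
    exact ⟨x, hx, hρ, fun e => by rw [hy e, hρ, one_div_mul_eq_div]⟩
  · rintro ⟨x, hx, hρ, hy⟩
    have hD : 1 ≤ Dx E v x := one_le_Dx E (fun e he => (hv e he).le) hx
    have hρ0 : 0 ≤ ρ := hρ ▸ by positivity
    have hρ1 : ρ ≤ 1 := hρ ▸ div_le_one_of_le₀ hD (by positivity)
    have hy' : ∀ e, y e = ρ * ∏ i ∈ e.1, x i := fun e => by rw [hy e, hρ, one_div_mul_eq_div]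
    refine ⟨fun e => ∏ i ∈ e.1, x i, x, hx, hρ0, ?_, hR.2.1 ⟨x, hx, fun _ => rfl⟩,
      fun i => prod_singleton x i, fun e => hy' e ▸ ?_⟩
    · rw [funext hy', add_sum_mul_prod_eq_mul_Dx, hρ, one_div_mul_cancel]
      positivity
    · exact mcCormick_of_eq_mul (hx.prod_eq_zero_or_one e.1) hρ0 hρ1

/-- **Proposition 4.** If `R ⊆ [0,1]^E` is an exact relaxation oracle, then the projection
onto the `(ρ,y)`-coordinates of the tuples `(ρ,y,z,x)` in the Big-M system with binary `x`
equals the choice probability set `C_G`. -/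
theorem bigM_formulation_exact
    (N : ℕ) (hN : 1 ≤ N)
    (E : Finset (Finset (Fin N)))
    (hne : ∀ e ∈ E, e.Nonempty)
    (hsing : ∀ i : Fin N, ({i} : Finset (Fin N)) ∈ E)
    (v : Finset (Fin N) → ℝ) (hv : ∀ e ∈ E, 0 < v e)
    (R : Set ({e // e ∈ E} → ℝ))
    (hR : IsExactOracle E hsing R) :
    {p : ℝ × ({e // e ∈ E} → ℝ) |
        ∃ (z : {e // e ∈ E} → ℝ) (x : Fin N → ℝ),
          IsBinaryVec x ∧ (p.1, p.2, z, x) ∈ bigMSystem E hsing v R}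
      = choiceSet E v :=
  bigM_formulation_exact_general N E hsing v hv R hR
end

section
/- Let G = (V, E_G) be a finite simple graph with |V| = N ≥ 2. A subset S ⊆ V maximizes AOP over all subsets of V if and only if S is a maximum independent set of G. (Core reduction claim in the proof of Theorem 3.) -/
open Finset

variable {V : Type*} [Fintype V] [DecidableEq V]

/-- `β(S)`: the number of edges of `G` with both endpoints in `S`. -/
def betaCount (G : SimpleGraph V) [DecidableRel G.Adj] (S : Finset V) : ℕ :=
  (G.edgeFinset.filter (fun e => e ∈ S.sym2)).card

/-- `AOP(S) = (|S|/N) / (1 + |S|/N² + N³·β(S))` where `N = |V|`. -/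
noncomputable def AOP (G : SimpleGraph V) [DecidableRel G.Adj] (S : Finset V) : ℝ :=
  ((S.card : ℝ) / (Fintype.card V : ℝ)) /
    (1 + (S.card : ℝ) / (Fintype.card V : ℝ) ^ 2 +
      (Fintype.card V : ℝ) ^ 3 * (betaCount G S : ℝ))

/-!
On independent sets `AOP` is `x ↦ (x/N)/(1 + x/N²)` evaluated at `|S|`, a strictly increasing
function, so among independent sets it is maximized exactly by those of maximum size. A set
containing an edge forces `N ≥ 2` and pays a penalty `N³·β(S) ≥ N³` in the denominator, which
pushes its value below `1/N³`, while any single vertex already scores `N/(N² + 1) > 1/N³`.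
-/

lemma strictMonoOn_div_div_one_add_div_sq {n : ℝ} (hn : 0 < n) :
    StrictMonoOn (fun x : ℝ => x / n / (1 + x / n ^ 2)) (Set.Ici 0) := by
  intro t ht s hs hts
  simp only [Set.mem_Ici] at ht hs
  rw [div_lt_div_iff₀ (by positivity) (by positivity)]
  have hcross : t / n * (s / n ^ 2) = s / n * (t / n ^ 2) := by ring
  have hlt : t / n < s / n := by gcongr
  linarith

lemma div_div_one_add_div_sq_add_mul_lt {n t b : ℝ} (hn : 2 ≤ n) (ht : 0 ≤ t) (htn : t ≤ n)
    (hb : 1 ≤ b) : t / n / (1 + t / n ^ 2 + n ^ 3 * b) < 1 / n / (1 + 1 / n ^ 2) := by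
  have hn0 : 0 < n := by linarith
  have hpenalty : t / n / (1 + t / n ^ 2 + n ^ 3 * b) ≤ 1 / n ^ 3 := by
    apply div_le_div₀ zero_le_one ((div_le_one hn0).mpr htn) (by positivity)
    have : 0 ≤ t / n ^ 2 := by positivity
    nlinarith [pow_pos hn0 3]
  have hsingleton : 1 / n / (1 + 1 / n ^ 2) = n / (n ^ 2 + 1) := by
    field_simp
  rw [hsingleton]
  refine hpenalty.trans_lt ?_
  rw [div_lt_div_iff₀ (by positivity) (by positivity)]
  nlinarith [pow_le_pow_left₀ (by norm_num) hn 2]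

section

variable (G : SimpleGraph V) [DecidableRel G.Adj]

lemma betaCount_singleton (v : V) : betaCount G {v} = 0 := by
  rw [betaCount, card_eq_zero, filter_eq_empty_iff]
  intro e he
  induction e with
  | h a b =>
    rw [SimpleGraph.mem_edgeFinset, SimpleGraph.mem_edgeSet] at he
    rw [mk_mem_sym2_iff, mem_singleton, mem_singleton]
    rintro ⟨rfl, rfl⟩
    exact G.irrefl he

lemma exists_adj_of_betaCount_ne_zero {S : Finset V} (h : betaCount G S ≠ 0) :
    ∃ u v, G.Adj u v := by
  obtain ⟨e, he⟩ := card_ne_zero.mp h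
  induction e with
  | h u v => exact ⟨u, v, G.mem_edgeFinset.mp (mem_filter.mp he).1⟩

lemma AOP_of_betaCount_eq_zero {S : Finset V} (h : betaCount G S = 0) :
    AOP G S =
      (S.card : ℝ) / Fintype.card V / (1 + (S.card : ℝ) / (Fintype.card V : ℝ) ^ 2) := by
  rw [AOP, h, Nat.cast_zero, mul_zero, add_zero]

lemma AOP_lt_AOP_of_card_lt {S T : Finset V} (hS : betaCount G S = 0)
    (hT : betaCount G T = 0) (h : S.card < T.card) : AOP G S < AOP G T := by
  have hN : (0 : ℝ) < Fintype.card V := by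
    exact_mod_cast (card_pos.mpr (card_pos.mp (S.card.zero_le.trans_lt h))).trans_le
      (card_le_univ T)
  rw [AOP_of_betaCount_eq_zero G hS, AOP_of_betaCount_eq_zero G hT]
  exact strictMonoOn_div_div_one_add_div_sq hN (Set.mem_Ici.mpr (Nat.cast_nonneg _))
    (Set.mem_Ici.mpr (Nat.cast_nonneg _)) (by exact_mod_cast h)

lemma AOP_le_AOP_iff_card_le {S T : Finset V} (hS : betaCount G S = 0)
    (hT : betaCount G T = 0) : AOP G T ≤ AOP G S ↔ T.card ≤ S.card := by
  constructor
  · intro h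
    by_contra! hlt
    exact (AOP_lt_AOP_of_card_lt G hS hT hlt).not_ge h
  · intro h
    rcases h.lt_or_eq with hlt | heq
    · exact (AOP_lt_AOP_of_card_lt G hT hS hlt).le
    · rw [AOP_of_betaCount_eq_zero G hS, AOP_of_betaCount_eq_zero G hT, heq]

lemma AOP_lt_AOP_singleton {T : Finset V} (hT : betaCount G T ≠ 0) (v : V) :
    AOP G T < AOP G {v} := by
  obtain ⟨u, w, huw⟩ := exists_adj_of_betaCount_ne_zero G hT
  have hN : (2 : ℝ) ≤ Fintype.card V := by
    exact_mod_cast Fintype.one_lt_card_iff.mpr ⟨u, w, huw.ne⟩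
  rw [AOP_of_betaCount_eq_zero G (betaCount_singleton G v), card_singleton, Nat.cast_one]
  exact div_div_one_add_div_sq_add_mul_lt hN (Nat.cast_nonneg _)
    (by exact_mod_cast card_le_univ T) (by exact_mod_cast Nat.one_le_iff_ne_zero.mpr hT)

end

theorem AOP_maximizer_iff_maximum_independent_set_general
    (G : SimpleGraph V) [DecidableRel G.Adj]
    (S : Finset V) :
    (∀ T : Finset V, AOP G T ≤ AOP G S) ↔
      (betaCount G S = 0 ∧
        ∀ T : Finset V, betaCount G T = 0 → T.card ≤ S.card) := by
  constructor
  · intro hmax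
    have hS : betaCount G S = 0 := by
      by_contra hS
      obtain ⟨v, -, -⟩ := exists_adj_of_betaCount_ne_zero G hS
      exact (AOP_lt_AOP_singleton G hS v).not_ge (hmax {v})
    exact ⟨hS, fun T hT => (AOP_le_AOP_iff_card_le G hS hT).mp (hmax T)⟩
  · rintro ⟨hS, hmaxCard⟩ T
    by_cases hT : betaCount G T = 0
    · exact (AOP_le_AOP_iff_card_le G hS hT).mpr (hmaxCard T hT)
    · obtain ⟨v, -, -⟩ := exists_adj_of_betaCount_ne_zero G hT
      have hv := betaCount_singleton G v
      exact (AOP_lt_AOP_singleton G hT v).le.trans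
        ((AOP_le_AOP_iff_card_le G hS hv).mpr (hmaxCard {v} hv))

/-- **Core reduction claim in the proof of Theorem 3.** For a finite simple graph on `N ≥ 2`
vertices, a subset `S` maximizes `AOP` over all subsets of `V` if and only if `S` is a
maximum independent set. -/
theorem AOP_maximizer_iff_maximum_independent_set
    (G : SimpleGraph V) [DecidableRel G.Adj]
    (hN : 2 ≤ Fintype.card V) (S : Finset V) :
    (∀ T : Finset V, AOP G T ≤ AOP G S) ↔
      (betaCount G S = 0 ∧
        ∀ T : Finset V, betaCount G T = 0 → T.card ≤ S.card) :=
  AOP_maximizer_iff_maximum_independent_set_general G S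
end

section
/- Consider the two-product instance V = {1,2}, E = {{1},{2},{1,2}}, with all attraction values v_{{1}} = v_{{2}} = v_{{1,2}} = 1, so that C_G = {(1,0,0,0), (1/2,1/2,0,0), (1/2,0,1/2,0), (1/4,1/4,1/4,1/4)} (coordinates (ρ, y₁, y₂, y₁₂)). The point p = (1/2, 0, 0, 1/2) satisfies ρ + y₁ + y₂ + y₁₂ = 1, 0 ≤ y_e ≤ ρ for all e ∈ {1, 2, 12}, y₁ + y₂ + ρ − 2 ≤ y₁₂, and y₁₂ ≤ y_i + 1 − ρ for i = 1,2 (the projected Big-M relaxation inequalities), yet p does not belong to conv(C_G). Hence the Big-M formulation is not locally sharp for this instance. (Example 4.) -/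
/-- The choice probability set `C_G` of the two-product instance `V = {1,2}`,
`E = {{1},{2},{1,2}}` with all attraction values equal to `1`, in coordinates
`(ρ, y₁, y₂, y₁₂)`. -/
def choiceSetTwoProducts : Set (ℝ × ℝ × ℝ × ℝ) :=
  {(1, 0, 0, 0), (1/2, 1/2, 0, 0), (1/2, 0, 1/2, 0), (1/4, 1/4, 1/4, 1/4)}

lemma half_space_convex : Convex ℝ {q : ℝ × ℝ × ℝ × ℝ | q.2.2.2 ≤ q.2.1} := by
  intro a ha b hb u v hu hv huv
  simp only [Set.mem_setOf_eq, Prod.snd_add, Prod.smul_snd, Prod.fst_add, Prod.smul_fst,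
    smul_eq_mul] at *
  nlinarith [mul_le_mul_of_nonneg_left ha hu, mul_le_mul_of_nonneg_left hb hv]

/-- **Example 4.** The point `p = (1/2, 0, 0, 1/2)` satisfies all the inequalities of the
projected Big-M relaxation — `ρ + y₁ + y₂ + y₁₂ = 1`, `0 ≤ y_e ≤ ρ`,
`y₁ + y₂ + ρ − 2 ≤ y₁₂`, and `y₁₂ ≤ y_i + 1 − ρ` for `i = 1,2` — yet it does not belong to
the convex hull of the choice probability set.  Hence the Big-M formulation is not locally
sharp for this instance. -/
theorem bigM_not_locally_sharp_example :
    let p : ℝ × ℝ × ℝ × ℝ := (1/2, 0, 0, 1/2)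
    (p.1 + p.2.1 + p.2.2.1 + p.2.2.2 = 1) ∧
    (0 ≤ p.2.1 ∧ p.2.1 ≤ p.1) ∧
    (0 ≤ p.2.2.1 ∧ p.2.2.1 ≤ p.1) ∧
    (0 ≤ p.2.2.2 ∧ p.2.2.2 ≤ p.1) ∧
    (p.2.1 + p.2.2.1 + p.1 - 2 ≤ p.2.2.2) ∧
    (p.2.2.2 ≤ p.2.1 + 1 - p.1) ∧
    (p.2.2.2 ≤ p.2.2.1 + 1 - p.1) ∧
    p ∉ convexHull ℝ choiceSetTwoProducts := by
  intro p
  refine ⟨by norm_num, ⟨by norm_num, by norm_num⟩, ⟨by norm_num, by norm_num⟩,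
    ⟨by norm_num, by norm_num⟩, by norm_num, by norm_num, by norm_num, ?_⟩
  intro hp
  have hsub : choiceSetTwoProducts ⊆ {q : ℝ × ℝ × ℝ × ℝ | q.2.2.2 ≤ q.2.1} := by
    intro q hq
    rcases hq with h | h | h | h <;> subst h <;> norm_num
  have := convexHull_min hsub half_space_convex hp
  simp only [Set.mem_setOf_eq] at this
  norm_num at this
end

section
/- Let V be a finite set, let m ≥ 3, and let u₁,…,u_m be distinct elements of V forming a cycle C = {e_k : k = 1,…,m} with edges e_k = {u_k, u_{k+1}} (indices taken modulo m, so e_m = {u_m, u_1}). Let D ⊆ C have odd cardinality, let S_in = {u ∈ V : u is the common endpoint of two distinct edges of D}, and let S_out = {u ∈ V : u is the common endpoint of two distinct edges of C∖D}. Then for every x ∈ {0,1}^V, setting z_{{i,j}} = x_i · x_j for each edge {i,j} ∈ C: Σ_{e∈C∖D} z_e − Σ_{e∈D} z_e ≤ Σ_{u∈S_out} x_u − Σ_{u∈S_in} x_u + (|D| − 1)/2. (Validity of the odd-cycle inequality for the monomial set.) -/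
/-!
Index the cycle by a permutation `σ` (here `k ↦ k + 1` on `Fin m`), put `y = x ∘ u`, let `a` be the
indicator of `D` and `d_k = |y_k - y_{σ k}|` the indicator that `x` cuts edge `k`. Up to a telescoping
sum around the cycle, the right-hand side minus the left-hand side is `(Σ_k |a_k - d_k| - 1) / 2`.
A 0/1 labelling cuts an even number of edges of a cycle while `|D|` is odd, so `a ≠ d` and this
slack is nonnegative.
-/

open Finset

namespace OddCycle

section

variable {ι : Type*} (σ : Equiv.Perm ι)

def cut (y : ι → ℝ) (k : ι) : ℝ := y k + y (σ k) - 2 * (y k * y (σ k))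

variable {σ} in
lemma cut_eq_zero_or_one {y : ι → ℝ} (hy : ∀ i, y i = 0 ∨ y i = 1) (k : ι) :
    cut σ y k = 0 ∨ cut σ y k = 1 := by
  rcases hy k with h | h <;> rcases hy (σ k) with h' | h' <;> norm_num [cut, h, h']

variable [Fintype ι]

lemma exists_nat_sum_eq_of_forall_eq_zero_or_one {f : ι → ℝ} (hf : ∀ i, f i = 0 ∨ f i = 1) :
    ∃ n : ℕ, ∑ i, f i = n :=
  ⟨#{i | f i = 1}, by
    rw [natCast_card_filter]
    exact sum_congr rfl fun i _ => by rcases hf i with h | h <;> simp [h]⟩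

lemma one_le_sum_of_ne {a b : ι → ℝ} (ha : ∀ i, a i = 0 ∨ a i = 1) (hb : ∀ i, b i = 0 ∨ b i = 1)
    (hab : a ≠ b) : 1 ≤ ∑ i, (a i + b i - 2 * a i * b i) := by
  obtain ⟨k, hk⟩ := Function.ne_iff.1 hab
  have hterm : ∀ i, a i + b i - 2 * a i * b i = if a i = b i then 0 else 1 := fun i => by
    rcases ha i with h | h <;> rcases hb i with h' | h' <;> norm_num [h, h']
  calc (1 : ℝ) = if a k = b k then 0 else 1 := by simp [hk]
    _ ≤ ∑ i, if a i = b i then (0 : ℝ) else 1 :=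
        single_le_sum (f := fun i => if a i = b i then (0 : ℝ) else 1)
          (fun i _ => by split_ifs <;> norm_num) (mem_univ k)
    _ = ∑ i, (a i + b i - 2 * a i * b i) := by simp only [hterm]

lemma exists_nat_sum_cut_eq_two_mul {y : ι → ℝ} (hy : ∀ i, y i = 0 ∨ y i = 1) :
    ∃ n : ℕ, ∑ k, cut σ y k = 2 * n := by
  obtain ⟨n, hn⟩ := exists_nat_sum_eq_of_forall_eq_zero_or_one (f := fun k => y k * (1 - y (σ k)))
    fun k => by rcases hy k with h | h <;> rcases hy (σ k) with h' | h' <;> simp [h, h']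
  refine ⟨n, ?_⟩
  calc ∑ k, cut σ y k = ∑ k, y k + ∑ k, y (σ k) - 2 * ∑ k, y k * y (σ k) := by
        simp only [cut, sum_add_distrib, sum_sub_distrib, mul_sum]
    _ = 2 * ∑ k, y k * (1 - y (σ k)) := by
        simp only [Equiv.sum_comp, mul_sub, mul_one, sum_sub_distrib]; ring
    _ = 2 * n := by rw [hn]

lemma edge_sum_sub_vertex_sum_eq (a y : ι → ℝ) :
    (∑ k, (1 - a k) * (y k * y (σ k)) - ∑ k, a k * (y k * y (σ k)))
      - (∑ k, (1 - a k) * (1 - a (σ k)) * y (σ k) - ∑ k, a k * a (σ k) * y (σ k))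
      = (∑ k, a k - ∑ k, (a k + cut σ y k - 2 * a k * cut σ y k)) / 2 := by
  set t : ι → ℝ := fun k => a k + cut σ y k - 2 * a k * cut σ y k
  set g : ι → ℝ := fun k => y k / 2 - a k * y k
  have hterm : ∀ k, (1 - a k) * (y k * y (σ k)) - a k * (y k * y (σ k))
      - ((1 - a k) * (1 - a (σ k)) * y (σ k) - a k * a (σ k) * y (σ k))
      = (a k - t k) / 2 + (g k - g (σ k)) := by
    intro k; simp only [t, cut, g]; ring
  have hsum := sum_congr rfl fun k (_ : k ∈ univ) => hterm k
  simp only [sum_add_distrib, sum_sub_distrib, ← sum_div, Equiv.sum_comp σ g] at hsum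
  linarith

theorem sum_compl_sub_sum_le [DecidableEq ι] {y : ι → ℝ} (hy : ∀ i, y i = 0 ∨ y i = 1)
    {D : Finset ι} (hD : Odd #D) :
    ∑ k ∈ Dᶜ, y k * y (σ k) - ∑ k ∈ D, y k * y (σ k) ≤
      ∑ k ∈ Dᶜ with σ k ∈ Dᶜ, y (σ k) - ∑ k ∈ D with σ k ∈ D, y (σ k) + (#D - 1) / 2 := by
  set a : ι → ℝ := fun k => if k ∈ D then 1 else 0
  have ha : ∀ k, a k = 0 ∨ a k = 1 := fun k => by by_cases hk : k ∈ D <;> simp [a, hk]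
  have hsum_a : ∑ k, a k = #D := by simp [a]
  have hne : a ≠ cut σ y := by
    intro h
    obtain ⟨n, hn⟩ := exists_nat_sum_cut_eq_two_mul σ hy
    rw [← h, hsum_a] at hn
    exact Nat.not_even_iff_odd.2 hD ⟨n, by rw [← two_mul]; exact_mod_cast hn⟩
  have hmem : ∀ f : ι → ℝ, ∑ k ∈ D, f k = ∑ k, a k * f k := fun f => by simp [a]
  have hcompl : ∀ f : ι → ℝ, ∑ k ∈ Dᶜ, f k = ∑ k, (1 - a k) * f k := fun f => by
    simp only [sub_mul, one_mul, sum_sub_distrib, ← hmem]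
    exact eq_sub_of_add_eq (sum_compl_add_sum D f)
  have hfilter_mem : ∑ k ∈ D with σ k ∈ D, y (σ k) = ∑ k, a k * a (σ k) * y (σ k) := by
    rw [sum_filter, hmem]
    exact sum_congr rfl fun k _ => by by_cases hk : σ k ∈ D <;> simp [a, hk]
  have hfilter_compl :
      ∑ k ∈ Dᶜ with σ k ∈ Dᶜ, y (σ k) = ∑ k, (1 - a k) * (1 - a (σ k)) * y (σ k) := by
    rw [sum_filter, hcompl]
    exact sum_congr rfl fun k _ => by by_cases hk : σ k ∈ D <;> simp [a, hk]
  rw [hcompl, hmem, hfilter_mem, hfilter_compl]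
  linarith [edge_sum_sub_vertex_sum_eq σ a y, one_le_sum_of_ne ha (cut_eq_zero_or_one hy) hne]

end

section

variable {ι V : Type*} [DecidableEq ι] [Fintype V] [DecidableEq V] (σ : Equiv.Perm ι)

def commonEndpoints (u : ι → V) (E : Finset ι) : Finset V :=
  {w | ∃ k ∈ E, ∃ l ∈ E, k ≠ l ∧ w ∈ ({u k, u (σ k)} : Finset V) ∧ w ∈ ({u l, u (σ l)} : Finset V)}

variable {σ}

lemma commonEndpoints_eq_image {u : ι → V} (hu : Function.Injective u) (hσ : ∀ k, σ k ≠ k)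
    (E : Finset ι) : commonEndpoints σ u E = {k ∈ E | σ k ∈ E}.image (u ∘ σ) := by
  ext w
  simp only [commonEndpoints, mem_filter, mem_univ, true_and, mem_image, mem_insert,
    mem_singleton, Function.comp_apply]
  constructor
  · rintro ⟨k, hk, l, hl, hkl, hwk | hwk, hwl | hwl⟩
    · exact absurd (hu (hwk.symm.trans hwl)) hkl
    · exact ⟨l, ⟨hl, hu (hwk.symm.trans hwl) ▸ hk⟩, hwl.symm⟩
    · exact ⟨k, ⟨hk, hu (hwk.symm.trans hwl) ▸ hl⟩, hwk.symm⟩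
    · exact absurd (σ.injective (hu (hwk.symm.trans hwl))) hkl
  · rintro ⟨k, ⟨hk, hσk⟩, rfl⟩
    exact ⟨σ k, hσk, k, hk, hσ k, Or.inl rfl, Or.inr rfl⟩

lemma sum_commonEndpoints {u : ι → V} (hu : Function.Injective u) (hσ : ∀ k, σ k ≠ k)
    (E : Finset ι) (x : V → ℝ) :
    ∑ w ∈ commonEndpoints σ u E, x w = ∑ k ∈ E with σ k ∈ E, x (u (σ k)) := by
  rw [commonEndpoints_eq_image hu hσ, sum_image (hu.comp σ.injective).injOn]
  rfl

end

end OddCycle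

open OddCycle in
/-- **Validity of the odd-cycle inequality for the monomial set.**
Let `u₁,…,u_m` (`m ≥ 3`) be distinct vertices forming a cycle with edges
`e_k = {u_k, u_{k+1}}` (indices mod `m`), let `D` be an odd-cardinality subset of the cycle,
let `S_in` (resp. `S_out`) be the vertices that are common endpoints of two distinct edges of
`D` (resp. of `C∖D`).  Then for every binary `x`, with `z_e = x_i·x_j` on each edge,
`Σ_{e∈C∖D} z_e − Σ_{e∈D} z_e ≤ Σ_{u∈S_out} x_u − Σ_{u∈S_in} x_u + (|D|−1)/2`. -/
theorem odd_cycle_inequality_valid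
    {V : Type*} [Fintype V] [DecidableEq V]
    (m : ℕ) (hm : 3 ≤ m)
    (u : Fin m → V) (hu : Function.Injective u)
    (D : Finset (Fin m)) (hD : Odd D.card)
    (x : V → ℝ) (hx : ∀ w : V, x w = 0 ∨ x w = 1) :
    let nxt : Fin m → Fin m := fun k => ⟨(k.val + 1) % m, Nat.mod_lt _ (by omega)⟩
    let edge : Fin m → Finset V := fun k => {u k, u (nxt k)}
    let z : Fin m → ℝ := fun k => x (u k) * x (u (nxt k))
    let Sin : Finset V := Finset.univ.filter
      (fun w => ∃ k ∈ D, ∃ l ∈ D, k ≠ l ∧ w ∈ edge k ∧ w ∈ edge l)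
    let Sout : Finset V := Finset.univ.filter
      (fun w => ∃ k ∈ Dᶜ, ∃ l ∈ Dᶜ, k ≠ l ∧ w ∈ edge k ∧ w ∈ edge l)
    ∑ k ∈ Dᶜ, z k - ∑ k ∈ D, z k ≤
      (∑ w ∈ Sout, x w) - (∑ w ∈ Sin, x w) + ((D.card : ℝ) - 1) / 2 := by
  intro nxt edge z Sin Sout
  have : NeZero m := ⟨by omega⟩
  let σ : Equiv.Perm (Fin m) := Equiv.addRight 1
  have hnxt : nxt = σ := funext fun k => Fin.ext (by simp [nxt, σ, Fin.val_add])
  have hσ : ∀ k, σ k ≠ k := fun k => by simpa [σ] using (by omega : m ≠ 1)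
  have hSin : Sin = commonEndpoints σ u D := by ext; simp [Sin, edge, hnxt, commonEndpoints]
  have hSout : Sout = commonEndpoints σ u Dᶜ := by ext; simp [Sout, edge, hnxt, commonEndpoints]
  rw [hSin, hSout, sum_commonEndpoints hu hσ, sum_commonEndpoints hu hσ]
  simp only [z, hnxt]
  exact sum_compl_sub_sum_le σ (fun k => hx (u k)) hD
end

section
/- Let V be a finite set, e₀ a finite subset of V, and e₁,…,e_m finite subsets of V such that the sets ẽ_k := e₀ ∩ e_k (k = 1,…,m) have the running intersection property: for every 2 ≤ k ≤ m there exists j < k with ẽ_k ∩ (ẽ_1 ∪ ⋯ ∪ ẽ_{k−1}) ⊆ ẽ_j. Set N(ẽ_1) = ∅ and N(ẽ_k) = ẽ_k ∩ (ẽ_1 ∪ ⋯ ∪ ẽ_{k−1}) for k ≥ 2; for each k with N(ẽ_k) ≠ ∅ fix some μ_k ∈ N(ẽ_k); and let ω = |e₀ ∖ (e_1 ∪ ⋯ ∪ e_m)| + |{k ∈ {1,…,m} : N(ẽ_k) = ∅}|. Then for every x ∈ {0,1}^V, writing z_e = ∏_{i∈e} x_i for each finite set e ⊆ V: Σ_{k=1}^m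 z_{e_k} + Σ_{v ∈ e₀ ∖ (e_1 ∪ ⋯ ∪ e_m)} x_v ≤ z_{e₀} + Σ_{k : N(ẽ_k) ≠ ∅} x_{μ_k} + ω − 1. (Validity of the running-intersection inequality for the monomial set.) -/
open Finset

variable {V : Type*} [Fintype V] [DecidableEq V]

/-- The running intersection `N(ẽ_k) = ẽ_k ∩ (ẽ_1 ∪ ⋯ ∪ ẽ_{k−1})` of the induced sets
`ẽ_k = e₀ ∩ e_k` with their predecessors (so `N(ẽ_1) = ∅`). -/
def runInter {m : ℕ} (e0 : Finset V) (e : Fin m → Finset V) (k : Fin m) : Finset V :=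
  (e0 ∩ e k) ∩ ((Finset.univ.filter (fun l => l < k)).biUnion (fun l => e0 ∩ e l))

/-- **Validity of the running-intersection inequality for the monomial set.**
If the sets `ẽ_k = e₀ ∩ e_k` have the running intersection property, `μ_k ∈ N(ẽ_k)` whenever
`N(ẽ_k) ≠ ∅`, and `ω = |e₀ ∖ ∪_k e_k| + |{k : N(ẽ_k) = ∅}|`, then for every binary `x`,
writing `z_e = ∏_{i∈e} x_i`:
`Σ_k z_{e_k} + Σ_{v ∈ e₀ ∖ ∪_k e_k} x_v ≤ z_{e₀} + Σ_{k : N(ẽ_k) ≠ ∅} x_{μ_k} + ω − 1`. -/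
theorem running_intersection_inequality_valid
    {m : ℕ} (e0 : Finset V) (e : Fin m → Finset V)
    (hrip : ∀ k : Fin m, 0 < k.val →
      ∃ j : Fin m, j < k ∧ runInter e0 e k ⊆ e0 ∩ e j)
    (μ : Fin m → V)
    (hμ : ∀ k : Fin m, (runInter e0 e k).Nonempty → μ k ∈ runInter e0 e k)
    (x : V → ℝ) (hx : ∀ w : V, x w = 0 ∨ x w = 1) :
    (∑ k : Fin m, ∏ i ∈ e k, x i) +
      (∑ v ∈ e0 \ Finset.univ.biUnion e, x v) ≤
    (∏ i ∈ e0, x i) +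
      (∑ k ∈ Finset.univ.filter (fun k : Fin m => (runInter e0 e k).Nonempty), x (μ k)) +
      ((((e0 \ Finset.univ.biUnion e).card : ℝ) +
        ((Finset.univ.filter (fun k : Fin m => runInter e0 e k = ∅)).card : ℝ)) - 1) := by
  classical
  set D := e0 \ Finset.univ.biUnion e with hD
  have hx0 : ∀ w, 0 ≤ x w := fun w => by rcases hx w with h | h <;> simp [h]
  have hx1 : ∀ w, x w ≤ 1 := fun w => by rcases hx w with h | h <;> simp [h]
  have hprod : ∀ s : Finset V,
      (∏ i ∈ s, x i = 0) ∨ ((∏ i ∈ s, x i = 1) ∧ ∀ i ∈ s, x i = 1) := by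
    intro s
    by_cases h : ∃ i ∈ s, x i = 0
    · obtain ⟨i, hi, hxi⟩ := h
      exact Or.inl (Finset.prod_eq_zero hi hxi)
    · push_neg at h
      have h1 : ∀ i ∈ s, x i = 1 := fun i hi => (hx i).resolve_left (h i hi)
      exact Or.inr ⟨Finset.prod_eq_one h1, h1⟩
  set a : Fin m → ℝ := fun k => ∏ i ∈ e k, x i with ha
  set b : Fin m → ℝ := fun k => if (runInter e0 e k).Nonempty then x (μ k) else 1 with hb
  -- termwise bound
  have hab : ∀ k, a k ≤ b k := by
    intro k
    rcases hprod (e k) with h | ⟨h1, hall⟩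
    · simp only [ha, hb, h]
      split
      · exact hx0 _
      · exact zero_le_one
    · simp only [ha, hb, h1]
      split
      · rename_i hN
        have hμk := hμ k hN
        have : μ k ∈ e k := by
          have := (Finset.mem_inter.mp (Finset.mem_inter.mp hμk).1).2
          exact this
        exact le_of_eq (hall _ this).symm
      · exact le_refl 1
  have hb1 : ∀ k, b k ≤ 1 := by
    intro k
    simp only [hb]
    split
    · exact hx1 _
    · exact le_refl 1
  -- b-sum identity
  have hfilter : Finset.univ.filter (fun k : Fin m => ¬ (runInter e0 e k).Nonempty)
      = Finset.univ.filter (fun k : Fin m => runInter e0 e k = ∅) := by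
    simp [Finset.not_nonempty_iff_eq_empty]
  have hbsum : ∑ k : Fin m, b k =
      (∑ k ∈ Finset.univ.filter (fun k : Fin m => (runInter e0 e k).Nonempty), x (μ k)) +
      ((Finset.univ.filter (fun k : Fin m => runInter e0 e k = ∅)).card : ℝ) := by
    simp only [hb, Finset.sum_ite, Finset.sum_const, nsmul_eq_mul, mul_one, hfilter]
  -- D-sum bound
  have hDsum : (∑ v ∈ D, x v) ≤ (D.card : ℝ) := by
    calc (∑ v ∈ D, x v) ≤ ∑ v ∈ D, (1 : ℝ) := Finset.sum_le_sum fun v _ => hx1 v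
    _ = (D.card : ℝ) := by simp
  -- key inequality
  have key : (∑ k : Fin m, a k) + (∑ v ∈ D, x v) + 1 ≤
      (∏ i ∈ e0, x i) + (∑ k : Fin m, b k) + (D.card : ℝ) := by
    by_cases he0 : ∀ i ∈ e0, x i = 1
    · have hz0 : (∏ i ∈ e0, x i) = 1 := Finset.prod_eq_one he0
      have h1 : (∑ k : Fin m, a k) ≤ ∑ k : Fin m, b k :=
        Finset.sum_le_sum fun k _ => hab k
      linarith
    · push_neg at he0
      obtain ⟨v, hv, hxv'⟩ := he0
      have hxv : x v = 0 := (hx v).resolve_right hxv'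
      have hz0 : (0 : ℝ) ≤ ∏ i ∈ e0, x i := Finset.prod_nonneg fun i _ => hx0 i
      by_cases hvU : v ∈ Finset.univ.biUnion e
      · -- v lies in some e k : gain from the minimal bad k
        obtain ⟨l, _, hvl⟩ := Finset.mem_biUnion.mp hvU
        set K : Finset (Fin m) :=
          Finset.univ.filter (fun k => ∃ w ∈ e0 ∩ e k, x w = 0) with hK
        have hKne : K.Nonempty :=
          ⟨l, Finset.mem_filter.mpr ⟨Finset.mem_univ l,
            ⟨v, Finset.mem_inter.mpr ⟨hv, hvl⟩, hxv⟩⟩⟩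
        set k := K.min' hKne with hk
        obtain ⟨w, hw, hxw⟩ := (Finset.mem_filter.mp (K.min'_mem hKne)).2
        have hak : a k = 0 := Finset.prod_eq_zero (Finset.mem_inter.mp hw).2 hxw
        have hbk : b k = 1 := by
          by_cases hN : (runInter e0 e k).Nonempty
          · have hμk := hμ k hN
            unfold runInter at hμk
            obtain ⟨hμ1, hμ2⟩ := Finset.mem_inter.mp hμk
            obtain ⟨j, hj, hμj⟩ := Finset.mem_biUnion.mp hμ2
            have hjlt : j < k := (Finset.mem_filter.mp hj).2
            have hxμ : x (μ k) = 1 := by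
              by_contra hcon
              have hx0' : x (μ k) = 0 := (hx _).resolve_right hcon
              have hjK : j ∈ K :=
                Finset.mem_filter.mpr ⟨Finset.mem_univ j, ⟨μ k, hμj, hx0'⟩⟩
              exact absurd (K.min'_le j hjK) (not_le.mpr hjlt)
            simp only [hb, hN, if_true, hxμ]
          · simp only [hb, hN, if_false]
        have hsa : (∑ k' : Fin m, a k') = a k + ∑ k' ∈ Finset.univ.erase k, a k' :=
          (Finset.add_sum_erase _ _ (Finset.mem_univ k)).symm
        have hsb : (∑ k' : Fin m, b k') = b k + ∑ k' ∈ Finset.univ.erase k, b k' :=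
          (Finset.add_sum_erase _ _ (Finset.mem_univ k)).symm
        have herase : (∑ k' ∈ Finset.univ.erase k, a k') ≤
            ∑ k' ∈ Finset.univ.erase k, b k' :=
          Finset.sum_le_sum fun k' _ => hab k'
        linarith [hDsum]
      · -- v is in the leftover set D
        have hvD : v ∈ D := Finset.mem_sdiff.mpr ⟨hv, hvU⟩
        have hsa : (∑ k : Fin m, a k) ≤ ∑ k : Fin m, b k :=
          Finset.sum_le_sum fun k _ => hab k
        have hsD : (∑ u ∈ D, x u) = x v + ∑ u ∈ D.erase v, x u :=
          (Finset.add_sum_erase _ _ hvD).symm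
        have hDe : (∑ u ∈ D.erase v, x u) ≤ ((D.erase v).card : ℝ) := by
          calc (∑ u ∈ D.erase v, x u) ≤ ∑ u ∈ D.erase v, (1 : ℝ) :=
                Finset.sum_le_sum fun u _ => hx1 u
          _ = ((D.erase v).card : ℝ) := by simp
        have hcard : ((D.erase v).card : ℝ) = (D.card : ℝ) - 1 := by
          rw [Finset.card_erase_of_mem hvD]
          have : 1 ≤ D.card := Finset.card_pos.mpr ⟨v, hvD⟩
          push_cast [Nat.cast_sub this]
          ring
        linarith
  linarith [key, hbsum.ge, hbsum.le]
end

section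
/- Let m ≥ 1, let Z ⊆ [0,∞)^m be a nonempty finite set, and let v ∈ ℝ^m with v_j > 0 for all j. Define φ : ℝ^m → ℝ × ℝ^m by φ(z) = (1/(1+⟨v,z⟩), z/(1+⟨v,z⟩)). Then conv(φ(Z)) = {(ρ, y) ∈ ℝ × ℝ^m : ρ > 0, y/ρ ∈ conv(Z), ρ + ⟨v, y⟩ = 1}. (The perspective/projective convexification identity underlying the local sharpness of the perspective formulation.) -/
/-!
If a linear functional `f` is positive on `s`, the radial projection `p ↦ (f p)⁻¹ • p` onto the
hyperplane `f = 1` maps `conv s` into the convex hull of the projected points: a convex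
combination `∑ wᵢ aᵢ` becomes the combination of the `(f aᵢ)⁻¹ • aᵢ` with weights `wᵢ f aᵢ`.
Now `φ z` is the radial projection of `(1, z)` onto the hyperplane `ρ + ⟨v, y⟩ = 1`, and `(1, z)`
is the radial projection of `φ z` onto the hyperplane `ρ = 1`. Projecting in both directions,
together with `conv ({1} ×ˢ Z) = {1} ×ˢ conv Z`, gives the two inclusions.
-/

open Finset

variable {E : Type*} [AddCommGroup E] [Module ℝ E]

theorem inv_smul_mem_convexHull_image_inv_smul (f : E →ₗ[ℝ] ℝ) {s : Set E}
    (hs : ∀ a ∈ s, 0 < f a) {q : E} (hq : q ∈ convexHull ℝ s) :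
    (f q)⁻¹ • q ∈ convexHull ℝ ((fun a => (f a)⁻¹ • a) '' s) := by
  have hfq : 0 < f q := convexHull_min hs (convex_halfSpace_gt f.isLinear 0) hq
  rw [_root_.convexHull_eq] at hq
  obtain ⟨ι, t, w, a, hw₀, hw₁, has, rfl⟩ := hq
  have hsum : ∑ i ∈ t, w i * f (a i) = f (t.centerMass w a) := by
    simp only [centerMass_eq_of_sum_1 _ _ hw₁, map_sum, map_smul, smul_eq_mul]
  have hcm : t.centerMass (fun i => w i * f (a i)) (fun i => (f (a i))⁻¹ • a i)
      = (f (t.centerMass w a))⁻¹ • t.centerMass w a := by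
    rw [centerMass, hsum, centerMass_eq_of_sum_1 _ _ hw₁]
    congr 1
    refine sum_congr rfl fun i hi => ?_
    rw [smul_smul, mul_assoc, mul_inv_cancel₀ (hs _ (has i hi)).ne', mul_one]
  rw [← hcm]
  exact t.centerMass_mem_convexHull (fun i hi => mul_nonneg (hw₀ i hi) (hs _ (has i hi)).le)
    (hsum ▸ hfq) fun i hi => Set.mem_image_of_mem _ (has i hi)

noncomputable def projectiveLift (ℓ : E →ₗ[ℝ] ℝ) (z : E) : ℝ × E :=
  ((1 + ℓ z)⁻¹, (1 + ℓ z)⁻¹ • z)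

namespace projectiveLift

variable (ℓ : E →ₗ[ℝ] ℝ) {Z : Set E}

theorem inv_fst_smul {z : E} (hz : 1 + ℓ z ≠ 0) :
    (projectiveLift ℓ z).1⁻¹ • projectiveLift ℓ z = (1, z) := by
  simp [projectiveLift, smul_smul, hz]

theorem inv_smul_image_singleton_prod (Z : Set E) :
    (fun p => (LinearMap.id.coprod ℓ p)⁻¹ • p) '' ({1} ×ˢ Z) = projectiveLift ℓ '' Z := by
  rw [Set.singleton_prod, Set.image_image]
  refine Set.image_congr fun z _ => ?_
  simp [projectiveLift]

theorem convexHull_image_subset (hZ : ∀ z ∈ Z, 0 < 1 + ℓ z) :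
    convexHull ℝ (projectiveLift ℓ '' Z) ⊆
      {p | 0 < p.1 ∧ p.1⁻¹ • p.2 ∈ convexHull ℝ Z ∧ p.1 + ℓ p.2 = 1} := by
  rintro ⟨ρ, y⟩ hp
  have hfst : ∀ p ∈ projectiveLift ℓ '' Z, 0 < LinearMap.fst ℝ ℝ E p := by
    rintro _ ⟨z, hz, rfl⟩
    exact inv_pos.2 (hZ z hz)
  have hline : ∀ p ∈ projectiveLift ℓ '' Z, LinearMap.id.coprod ℓ p = 1 := by
    rintro _ ⟨z, hz, rfl⟩
    simp only [projectiveLift, LinearMap.coprod_apply, LinearMap.id_apply, map_smul, smul_eq_mul]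
    rw [← mul_one_add, inv_mul_cancel₀ (hZ z hz).ne']
  have hproj := inv_smul_mem_convexHull_image_inv_smul _ hfst hp
  have hZ' : (fun p => (LinearMap.fst ℝ ℝ E p)⁻¹ • p) '' (projectiveLift ℓ '' Z) = {1} ×ˢ Z := by
    rw [Set.image_image, Set.singleton_prod]
    exact Set.image_congr fun z hz => inv_fst_smul ℓ (hZ z hz).ne'
  rw [hZ', convexHull_prod, convexHull_singleton] at hproj
  exact ⟨convexHull_min hfst (convex_halfSpace_gt (LinearMap.fst ℝ ℝ E).isLinear 0) hp,
    by simpa using hproj.2,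
    convexHull_min hline (convex_hyperplane (LinearMap.id.coprod ℓ).isLinear 1) hp⟩

theorem subset_convexHull_image (hZ : ∀ z ∈ Z, 0 < 1 + ℓ z) :
    {p | 0 < p.1 ∧ p.1⁻¹ • p.2 ∈ convexHull ℝ Z ∧ p.1 + ℓ p.2 = 1} ⊆
      convexHull ℝ (projectiveLift ℓ '' Z) := by
  rintro ⟨ρ, y⟩ ⟨hρ, hy, hline⟩
  have hpos : ∀ p ∈ ({1} ×ˢ Z : Set (ℝ × E)), 0 < LinearMap.id.coprod ℓ p := by
    rintro ⟨_, z⟩ ⟨rfl, hz⟩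
    exact hZ z hz
  have hq : ((1 : ℝ), ρ⁻¹ • y) ∈ convexHull ℝ ({1} ×ˢ Z) := by
    rw [convexHull_prod, convexHull_singleton]
    exact ⟨rfl, hy⟩
  have hq_val : LinearMap.id.coprod ℓ (1, ρ⁻¹ • y) = ρ⁻¹ := by
    simp only [LinearMap.coprod_apply, LinearMap.id_apply, map_smul, smul_eq_mul]
    field_simp
    linarith
  have hproj := inv_smul_mem_convexHull_image_inv_smul _ hpos hq
  rwa [inv_smul_image_singleton_prod, hq_val, inv_inv, Prod.smul_mk, smul_inv_smul₀ hρ.ne',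
    smul_eq_mul, mul_one] at hproj

theorem convexHull_image (hZ : ∀ z ∈ Z, 0 < 1 + ℓ z) :
    convexHull ℝ (projectiveLift ℓ '' Z) =
      {p | 0 < p.1 ∧ p.1⁻¹ • p.2 ∈ convexHull ℝ Z ∧ p.1 + ℓ p.2 = 1} :=
  (convexHull_image_subset ℓ hZ).antisymm (subset_convexHull_image ℓ hZ)

end projectiveLift

theorem perspective_convexification_identity_general
    (m : ℕ)
    (Z : Set (Fin m → ℝ))
    (hZpos : ∀ z ∈ Z, ∀ j : Fin m, 0 ≤ z j)
    (v : Fin m → ℝ) (hv : ∀ j : Fin m, 0 < v j) :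
    convexHull ℝ
        ((fun z : Fin m → ℝ =>
          ((1 / (1 + ∑ j, v j * z j), (1 / (1 + ∑ j, v j * z j)) • z) :
            ℝ × (Fin m → ℝ))) '' Z)
      = {p : ℝ × (Fin m → ℝ) |
          0 < p.1 ∧ p.1⁻¹ • p.2 ∈ convexHull ℝ Z ∧
          p.1 + ∑ j, v j * p.2 j = 1} := by
  have hpos : ∀ z ∈ Z, 0 < 1 + dotProductBilin ℝ ℝ v z := fun z hz =>
    add_pos_of_pos_of_nonneg one_pos
      (sum_nonneg fun j _ => mul_nonneg (hv j).le (hZpos z hz j) : 0 ≤ ∑ j, v j * z j)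
  simp only [one_div]
  exact projectiveLift.convexHull_image _ hpos

/-- **The perspective/projective convexification identity** underlying the local sharpness of
the perspective formulation.  For a nonempty finite set `Z ⊆ [0,∞)^m` and strictly positive
`v`, with `φ(z) = (1/(1+⟨v,z⟩), z/(1+⟨v,z⟩))`, one has
`conv(φ(Z)) = {(ρ,y) : ρ > 0, y/ρ ∈ conv(Z), ρ + ⟨v,y⟩ = 1}`. -/
theorem perspective_convexification_identity
    (m : ℕ) (hm : 1 ≤ m)
    (Z : Set (Fin m → ℝ)) (hZne : Z.Nonempty) (hZfin : Z.Finite)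
    (hZpos : ∀ z ∈ Z, ∀ j : Fin m, 0 ≤ z j)
    (v : Fin m → ℝ) (hv : ∀ j : Fin m, 0 < v j) :
    convexHull ℝ
        ((fun z : Fin m → ℝ =>
          ((1 / (1 + ∑ j, v j * z j), (1 / (1 + ∑ j, v j * z j)) • z) :
            ℝ × (Fin m → ℝ))) '' Z)
      = {p : ℝ × (Fin m → ℝ) |
          0 < p.1 ∧ p.1⁻¹ • p.2 ∈ convexHull ℝ Z ∧
          p.1 + ∑ j, v j * p.2 j = 1} :=
  perspective_convexification_identity_general m Z hZpos v hv
end
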